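/- Let F(μ) = (1/2)‖Y − μ‖² + λ·‖Dμ‖₁ with ‖Dμ‖₁ = Σ_{i=1}^{n−1} |μ_{i+1} − μ_i| for a fixed Y ∈ ℝⁿ and λ > 0. Suppose μ̂ is the (unique) minimizer of F and μ̂ is constant on each interval of the partition S = (S_1,...,S_k) of (1,...,n) into consecutive intervals, with sign pattern s_α = sign(μ̂_{S_{α+1}} − μ̂_{S_α}) ∈ {−1, 1} for α = 1,...,k−1. Then μ̂ = P^S Y + v, where P^S is the orthogonal projection onto vectors constant on each S_α and v ∈ ℝⁿ is the vector taking constant value λ(s_α − s_{α−1})/|S_α| on S_α (with the convention s_0 = s_k = 0). -/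

import Mathlib

open Finset
open scoped Classical

noncomputable section

/-- The part (interval) of the partition containing a given index. -/
def fiber {n k : ℕ} (part : Fin (n + 1) → Fin (k + 1)) (α : Fin (k + 1)) :
    Finset (Fin (n + 1)) :=
  Finset.univ.filter (fun i => part i = α)

/-- The total-variation objective on the linear chain with `n + 1` vertices. -/
def Ftv {n : ℕ} (Y : Fin (n + 1) → ℝ) (lam : ℝ) (μ : Fin (n + 1) → ℝ) : ℝ :=
  (1/2) * ∑ i, (Y i - μ i) ^ 2 + lam * ∑ i : Fin n, |μ i.succ - μ i.castSucc|

lemma abs_add_small (d c : ℝ) (hd : d ≠ 0) (hc : |c| ≤ |d|) :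
    |d + c| = |d| + c * (if 0 < d then 1 else -1) := by
  rcases abs_le.mp hc with ⟨h1, h2⟩
  rcases lt_or_gt_of_ne hd with h | h
  · rw [if_neg (by linarith), abs_of_neg h] at *
    rw [abs_of_nonpos (by linarith)]; ring
  · rw [if_pos h, abs_of_pos h] at *
    rw [abs_of_nonneg (by linarith)]; ring

lemma eq_zero_of_quad (A c ε : ℝ) (hε : 0 < ε) (hc : 0 ≤ c)
    (h : ∀ t : ℝ, |t| ≤ ε → 0 ≤ t * A + t ^ 2 * c) : A = 0 := by
  by_contra hA
  have hApos : 0 < |A| := abs_pos.mpr hA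
  set δ := min ε (|A| / (2 * c + 2)) with hδ
  have hδpos : 0 < δ := lt_min hε (div_pos hApos (by linarith))
  have hδε : δ ≤ ε := min_le_left _ _
  have hδA : δ * (2 * c + 2) ≤ |A| := by
    have := min_le_right ε (|A| / (2 * c + 2))
    rw [le_div_iff₀ (by linarith)] at this
    linarith [this]
  rcases lt_or_gt_of_ne hA with h' | h'
  · have := h δ (by rw [abs_of_pos hδpos]; exact hδε)
    rw [abs_of_neg h'] at hδA hApos
    nlinarith
  · have := h (-δ) (by rw [abs_neg, abs_of_pos hδpos]; exact hδε)
    rw [abs_of_pos h'] at hδA hApos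
    nlinarith

section
variable {n k : ℕ} (part : Fin (n + 1) → Fin (k + 1)) (hmono : Monotone part)
    (hsurj : Function.Surjective part)

include hmono hsurj in
lemma part_zero : part 0 = 0 := by
  obtain ⟨j, hj⟩ := hsurj 0
  have := hmono (Fin.zero_le j)
  rw [hj] at this
  exact le_antisymm this (Fin.zero_le _)

include hmono hsurj in
lemma part_last : part (Fin.last n) = Fin.last k := by
  obtain ⟨j, hj⟩ := hsurj (Fin.last k)
  have := hmono (Fin.le_last j)
  rw [hj] at this
  exact le_antisymm (Fin.le_last _) this

include hmono hsurj in
lemma part_adj (i : Fin n) : (part i.succ : ℕ) ≤ (part i.castSucc : ℕ) + 1 := by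
  by_contra hcon
  push_neg at hcon
  have hlt : ((part i.castSucc : ℕ) + 1) < k + 1 := by
    have := (part i.succ).isLt; omega
  obtain ⟨j, hj⟩ := hsurj ⟨(part i.castSucc : ℕ) + 1, hlt⟩
  rcases le_or_gt j i.castSucc with h | h
  · have := hmono h
    rw [hj] at this
    have : (part i.castSucc : ℕ) + 1 ≤ (part i.castSucc : ℕ) := this
    omega
  · have h2 : i.succ ≤ j := by
      have : (i.castSucc : ℕ) < j := h
      simp only [Fin.le_def, Fin.val_succ]
      simp only [Fin.coe_castSucc] at this
      omega
    have := hmono h2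
    rw [hj] at this
    have : (part i.succ : ℕ) ≤ (part i.castSucc : ℕ) + 1 := this
    omega
end

/-- If the TV-penalized minimizer `μ̂` is constant on the consecutive intervals
`S_0,…,S_k` (fibers of the monotone surjection `part`) with strict sign pattern
`s`, then `μ̂ = P^S Y + v`, where `v` takes value `λ(s_α − s_{α−1})/|S_α|` on
`S_α` (with `s_{-1} = s_k = 0` in 0-based indexing). -/
theorem stmt14 {n k : ℕ} (Y : Fin (n + 1) → ℝ) (lam : ℝ) (hlam : 0 < lam)
    (μhat : Fin (n + 1) → ℝ)
    (hmin : ∀ μ : Fin (n + 1) → ℝ, Ftv Y lam μhat ≤ Ftv Y lam μ)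
    (part : Fin (n + 1) → Fin (k + 1)) (hmono : Monotone part)
    (hsurj : Function.Surjective part)
    (g : Fin (k + 1) → ℝ) (hg : ∀ i, μhat i = g (part i))
    (hdistinct : ∀ α : Fin k, g α.succ ≠ g α.castSucc)
    (s : Fin k → ℝ)
    (hs : ∀ α : Fin k, s α = if g α.castSucc < g α.succ then 1 else -1) :
    ∀ i : Fin (n + 1), μhat i =
      (∑ j ∈ fiber part (part i), Y j) / ((fiber part (part i)).card : ℝ) +
      lam * ((if h : (part i : ℕ) < k then s ⟨part i, h⟩ else 0) -
             (if h : 0 < (part i : ℕ) then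
                s ⟨(part i : ℕ) - 1, by have := (part i).isLt; omega⟩ else 0)) /
        ((fiber part (part i)).card : ℝ) := by
  classical
  -- the fibers are nonempty
  have hfibne : ∀ α : Fin (k+1), (fiber part α).Nonempty := by
    intro α
    obtain ⟨j, hj⟩ := hsurj α
    exact ⟨j, by simp [fiber, hj]⟩
  -- a uniform positive lower bound on jumps
  have hεex : ∃ ε > 0, ∀ β : Fin k, ε ≤ |g β.succ - g β.castSucc| := by
    rcases Nat.eq_zero_or_pos k with hk | hk
    · exact ⟨1, one_pos, fun β => absurd β.2 (by omega)⟩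
    · have hne : (Finset.univ : Finset (Fin k)).Nonempty := ⟨⟨0, hk⟩, Finset.mem_univ _⟩
      refine ⟨Finset.univ.inf' hne (fun β => |g β.succ - g β.castSucc|), ?_,
        fun β => Finset.inf'_le _ (Finset.mem_univ β)⟩
      rw [gt_iff_lt, Finset.lt_inf'_iff]
      intro β _
      exact abs_pos.mpr (sub_ne_zero_of_ne (hdistinct β))
  obtain ⟨ε, hεpos, hεle⟩ := hεex
  -- extended sign sequences
  set scur : Fin (k+1) → ℝ := fun α => if h : (α : ℕ) < k then s ⟨(α : ℕ), h⟩ else 0 with hscur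
  set sprev : Fin (k+1) → ℝ :=
    fun α => if h : 0 < (α : ℕ) then s ⟨(α : ℕ) - 1, by have := α.isLt; omega⟩ else 0 with hsprev
  -- the key block equation
  have key : ∀ α₀ : Fin (k+1),
      ((fiber part α₀).card : ℝ) * g α₀
        = (∑ j ∈ fiber part α₀, Y j) + lam * (scur α₀ - sprev α₀) := by
    intro α₀
    set SP : ℝ := sprev α₀ with hSP
    set SC : ℝ := scur α₀ with hSC
    set χ : Fin (n+1) → ℝ := fun j => if part j = α₀ then 1 else 0 with hχ
    set f : Fin (k+1) → ℝ :=
      fun β => if (β : ℕ) = (α₀ : ℕ) then SP else if (α₀ : ℕ) < (β : ℕ) then SP - SC else 0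
      with hf
    -- per-edge identity
    have edge : ∀ t : ℝ, |t| ≤ ε → ∀ i : Fin n,
        |(μhat i.succ + t * χ i.succ) - (μhat i.castSucc + t * χ i.castSucc)|
          = |μhat i.succ - μhat i.castSucc|
            + t * (f (part i.succ) - f (part i.castSucc)) := by
      intro t ht i
      have hab : part i.castSucc ≤ part i.succ := hmono (Fin.castSucc_le_succ i)
      have hadj := part_adj part hmono hsurj i
      rcases eq_or_lt_of_le hab with heq | hlt
      · have h1 : μhat i.succ = μhat i.castSucc := by
          rw [hg i.succ, hg i.castSucc, heq]
        have h2 : χ i.succ = χ i.castSucc := by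
          simp only [hχ]; rw [heq]
        rw [h1, h2, heq]
        simp
      · have hba : (part i.succ : ℕ) = (part i.castSucc : ℕ) + 1 := by
          have : (part i.castSucc : ℕ) < part i.succ := hlt
          omega
        have hk' : (part i.castSucc : ℕ) < k := by
          have := (part i.succ).isLt; omega
        set β : Fin k := ⟨(part i.castSucc : ℕ), hk'⟩ with hβ
        have hbsucc : β.succ = part i.succ := by
          apply Fin.ext; rw [hβ]; simp [Fin.val_succ]; omega
        have hbcast : β.castSucc = part i.castSucc := by
          apply Fin.ext; rw [hβ]; simp
        set d : ℝ := μhat i.succ - μhat i.castSucc with hd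
        have hdg : d = g β.succ - g β.castSucc := by
          rw [hd, hg i.succ, hg i.castSucc, ← hbsucc, ← hbcast]
        have hdne : d ≠ 0 := by
          rw [hdg]; exact sub_ne_zero_of_ne (hdistinct β)
        have hsβ : s β = if 0 < d then 1 else -1 := by
          rw [hs β, hdg]
          by_cases h : g β.castSucc < g β.succ
          · rw [if_pos h, if_pos (by linarith)]
          · push_neg at h
            rw [if_neg (by push_neg; linarith), if_neg (by push_neg; linarith)]
        have hχbound : |t * (χ i.succ - χ i.castSucc)| ≤ |d| := by
          have h1 : |χ i.succ - χ i.castSucc| ≤ 1 := by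
            simp only [hχ]
            split <;> split <;> norm_num
          calc |t * (χ i.succ - χ i.castSucc)| = |t| * |χ i.succ - χ i.castSucc| :=
                abs_mul _ _
            _ ≤ ε * 1 := mul_le_mul ht h1 (abs_nonneg _) (le_of_lt hεpos)
            _ ≤ |d| := by rw [mul_one, hdg]; exact hεle β
        have main := abs_add_small d (t * (χ i.succ - χ i.castSucc)) hdne hχbound
        have lhs_eq : (μhat i.succ + t * χ i.succ) - (μhat i.castSucc + t * χ i.castSucc)
            = d + t * (χ i.succ - χ i.castSucc) := by rw [hd]; ring
        have hfs : f (part i.succ) - f (part i.castSucc)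
            = (χ i.succ - χ i.castSucc) * s β := by
          simp only [hχ, hf]
          rcases Nat.lt_trichotomy ((α₀ : ℕ)) ((part i.castSucc : ℕ)) with hcase | hcase | hcase
          · have h1 : ¬((part i.succ : ℕ) = (α₀ : ℕ)) := by omega
            have h2 : (α₀ : ℕ) < (part i.succ : ℕ) := by omega
            have h3 : ¬((part i.castSucc : ℕ) = (α₀ : ℕ)) := by omega
            have h5 : part i.succ ≠ α₀ := fun h => h1 (by rw [h])
            have h6 : part i.castSucc ≠ α₀ := fun h => h3 (by rw [h])
            rw [if_neg h1, if_pos h2, if_neg h3, if_pos hcase, if_neg h5, if_neg h6]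
            ring
          · have hak : (α₀ : ℕ) < k := by omega
            have h1 : ¬((part i.succ : ℕ) = (α₀ : ℕ)) := by omega
            have h2 : (α₀ : ℕ) < (part i.succ : ℕ) := by omega
            have h3 : (part i.castSucc : ℕ) = (α₀ : ℕ) := hcase.symm
            have h5 : part i.succ ≠ α₀ := fun h => h1 (by rw [h])
            have h6 : part i.castSucc = α₀ := Fin.ext h3
            have hβval : (⟨(α₀ : ℕ), hak⟩ : Fin k) = β := by
              apply Fin.ext
              show (α₀ : ℕ) = ↑(part i.castSucc)
              omega
            rw [if_neg h1, if_pos h2, if_pos h3, if_neg h5, if_pos h6]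
            rw [hSC, hscur]
            simp only
            rw [dif_pos hak, hβval]
            ring
          · by_cases hb : (part i.succ : ℕ) = (α₀ : ℕ)
            · have h0 : 0 < (α₀ : ℕ) := by omega
              have h3 : ¬((part i.castSucc : ℕ) = (α₀ : ℕ)) := by omega
              have h4 : ¬((α₀ : ℕ) < (part i.castSucc : ℕ)) := by omega
              have h5 : part i.succ = α₀ := Fin.ext hb
              have h6 : part i.castSucc ≠ α₀ := fun h => h3 (by rw [h])
              have hβval : (⟨(α₀ : ℕ) - 1, by have := α₀.isLt; omega⟩ : Fin k) = β := by
                apply Fin.ext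
                show (α₀ : ℕ) - 1 = ↑(part i.castSucc)
                omega
              rw [if_pos hb, if_neg h3, if_neg h4, if_pos h5, if_neg h6]
              rw [hSP, hsprev]
              simp only
              rw [dif_pos h0, hβval]
              ring
            · have h3 : ¬((part i.castSucc : ℕ) = (α₀ : ℕ)) := by omega
              have h4 : ¬((α₀ : ℕ) < (part i.castSucc : ℕ)) := by omega
              have h7 : ¬((α₀ : ℕ) < (part i.succ : ℕ)) := by omega
              have h5 : part i.succ ≠ α₀ := fun h => hb (by rw [h])
              have h6 : part i.castSucc ≠ α₀ := fun h => h3 (by rw [h])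
              rw [if_neg hb, if_neg h7, if_neg h3, if_neg h4, if_neg h5, if_neg h6]
              ring
        rw [lhs_eq, main, ← hsβ, hfs]
        ring
    -- bridging filtered sums
    have hz : ∀ z : Fin (n+1) → ℝ,
        (∑ j, if part j = α₀ then z j else 0) = ∑ j ∈ fiber part α₀, z j := by
      intro z
      exact (Finset.sum_filter (fun j => part j = α₀) z).symm
    have hz1 : (∑ j, if part j = α₀ then (1:ℝ) else 0) = ((fiber part α₀).card : ℝ) := by
      rw [hz (fun _ => (1:ℝ))]
      simp
    -- telescoping the sign sums
    have htel : (∑ i : Fin n, (f (part i.succ) - f (part i.castSucc))) = SP - SC := by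
      set φ : ℕ → ℝ := fun m => if h : m < n + 1 then f (part ⟨m, h⟩) else 0 with hφ
      have hstep : ∀ i : Fin n, f (part i.succ) - f (part i.castSucc) = φ (↑i + 1) - φ ↑i := by
        intro i
        have e1 : (⟨(↑i : ℕ) + 1, by omega⟩ : Fin (n+1)) = i.succ := Fin.ext (by simp)
        have e2 : (⟨(↑i : ℕ), by omega⟩ : Fin (n+1)) = i.castSucc := Fin.ext (by simp)
        rw [hφ]
        simp only
        rw [dif_pos (by omega : (↑i : ℕ) + 1 < n + 1), dif_pos (by omega : (↑i : ℕ) < n + 1),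
          e1, e2]
      have hn : φ n = SP - SC := by
        have e3 : (⟨n, by omega⟩ : Fin (n+1)) = Fin.last n := Fin.ext (by simp)
        rw [hφ]
        simp only
        rw [dif_pos (by omega : n < n + 1), e3, part_last part hmono hsurj, hf]
        simp only [Fin.val_last]
        by_cases hkk : k = (α₀ : ℕ)
        · rw [if_pos hkk, hSC, hscur]
          simp only
          rw [dif_neg (by omega)]
          ring
        · rw [if_neg hkk, if_pos (by have := α₀.isLt; omega)]
      have h0 : φ 0 = 0 := by
        have e4 : (⟨0, by omega⟩ : Fin (n+1)) = 0 := Fin.ext (by simp)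
        rw [hφ]
        simp only
        rw [dif_pos (by omega : 0 < n + 1), e4, part_zero part hmono hsurj, hf]
        beta_reduce
        rw [Fin.val_zero]
        by_cases h00 : 0 = (α₀ : ℕ)
        · rw [if_pos h00, hSP, hsprev]
          simp only
          rw [dif_neg (by omega)]
        · rw [if_neg h00, if_neg (by omega)]
      calc (∑ i : Fin n, (f (part i.succ) - f (part i.castSucc)))
          = ∑ i : Fin n, (φ (↑i + 1) - φ ↑i) := Finset.sum_congr rfl fun i _ => hstep i
        _ = ∑ m ∈ Finset.range n, (φ (m + 1) - φ m) :=
            Fin.sum_univ_eq_sum_range (fun m => φ (m + 1) - φ m) n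
        _ = φ n - φ 0 := Finset.sum_range_sub φ n
        _ = SP - SC := by rw [hn, h0, sub_zero]
    -- expansion of the objective along the perturbation
    have expand : ∀ t : ℝ, |t| ≤ ε →
        Ftv Y lam (fun j => μhat j + t * χ j)
          = Ftv Y lam μhat
            + t * (lam * (SP - SC) - ∑ j ∈ fiber part α₀, (Y j - μhat j))
            + t ^ 2 * (((fiber part α₀).card : ℝ) / 2) := by
      intro t ht
      have hTV : (∑ i : Fin n,
            |(μhat i.succ + t * χ i.succ) - (μhat i.castSucc + t * χ i.castSucc)|)
          = (∑ i : Fin n, |μhat i.succ - μhat i.castSucc|) + t * (SP - SC) := by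
        rw [Finset.sum_congr rfl (fun i _ => edge t ht i), Finset.sum_add_distrib,
          ← Finset.mul_sum, htel]
      have hq1 : ∀ j : Fin (n+1), (Y j - (μhat j + t * χ j)) ^ 2
          = (Y j - μhat j) ^ 2 - 2 * t * (if part j = α₀ then (Y j - μhat j) else 0)
            + t ^ 2 * (if part j = α₀ then (1:ℝ) else 0) := by
        intro j
        simp only [hχ]
        split <;> ring
      have hQ : (∑ j, (Y j - (μhat j + t * χ j)) ^ 2)
          = (∑ j, (Y j - μhat j) ^ 2)
            - 2 * t * (∑ j ∈ fiber part α₀, (Y j - μhat j))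
            + t ^ 2 * ((fiber part α₀).card : ℝ) := by
        rw [Finset.sum_congr rfl (fun j _ => hq1 j), Finset.sum_add_distrib,
          Finset.sum_sub_distrib, ← Finset.mul_sum, ← Finset.mul_sum,
          hz (fun j => Y j - μhat j), hz1]
      simp only [Ftv]
      rw [hQ, hTV]
      ring
    -- optimality forces the linear coefficient to vanish
    have hA0 : lam * (SP - SC) - (∑ j ∈ fiber part α₀, (Y j - μhat j)) = 0 := by
      apply eq_zero_of_quad _ (((fiber part α₀).card : ℝ) / 2) ε hεpos (by positivity)
      intro t ht
      have h1 := hmin (fun j => μhat j + t * χ j)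
      have h2 := expand t ht
      linarith
    -- rewrite the fiber sum
    have hsum : (∑ j ∈ fiber part α₀, (Y j - μhat j))
        = (∑ j ∈ fiber part α₀, Y j) - ((fiber part α₀).card : ℝ) * g α₀ := by
      rw [Finset.sum_sub_distrib]
      congr 1
      calc (∑ j ∈ fiber part α₀, μhat j) = ∑ j ∈ fiber part α₀, g α₀ := by
            apply Finset.sum_congr rfl
            intro j hj
            rw [hg j]
            congr 1
            have := hj
            simp only [fiber, Finset.mem_filter] at this
            exact this.2
        _ = ((fiber part α₀).card : ℝ) * g α₀ := by
            rw [Finset.sum_const, nsmul_eq_mul]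
    rw [hsum] at hA0
    linarith
  -- conclude
  intro i₀
  have hk1 := key (part i₀)
  have hcpos : 0 < ((fiber part (part i₀)).card : ℝ) := by
    exact_mod_cast Finset.card_pos.mpr (hfibne (part i₀))
  have hc : ((fiber part (part i₀)).card : ℝ) ≠ 0 := ne_of_gt hcpos
  have e1 : scur (part i₀)
      = (if h : (part i₀ : ℕ) < k then s ⟨(part i₀ : ℕ), h⟩ else 0) := by rw [hscur]
  have e2 : sprev (part i₀)
      = (if h : 0 < (part i₀ : ℕ) then
          s ⟨(part i₀ : ℕ) - 1, by have := (part i₀).isLt; omega⟩ else 0) := by rw [hsprev]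
  rw [hg i₀, ← add_div, eq_div_iff hc, ← e1, ← e2]
  linarith [hk1]

end
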